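/- arXiv:2309.00554 — 2 statements merged into one kernel-verified Lean document; each statement's English description precedes it below -/
import Mathlib

section
/- Let $\mathcal{C} \subseteq \mathcal{D}$ be a thick subcategory of a triangulated category, $w$ a weight structure on $\mathcal{C}$, and $t$ a t-structure on $\mathcal{D}$. Then the following are equivalent: (i) $w$ is left orthogonal to $t$ (i.e. $\mathcal{C}_{w\geq 0} \perp \mathcal{D}^{t<0}$ and $\mathcal{C}_{w\leq 0} \perp \mathcal{D}^{t>0}$); (ii) $w$ is w-strictly left orthogonal to $t$ (i.e. $\mathcal{C}_{w\geq 0} = {}^{\perp}(\mathcal{D}^{t<0}) \cap \mathcal{C}$ and $\mathcal{C}_{w\leq 0} = {}^{\perp}(\mathcal{D}^{t>0}) \cap \mathcal{C}$); (iii) $\mathcal{C}_{w\leq 0} = \mathcal{D}^{t\leq 0} \cap \mathcal{C}$ and $\mathcal{C}_{w\geq 0} = {}^{\perp}(\mathcal{D}^{t<0}) \cap \mathcal{C}$. -/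
open CategoryTheory Limits Pretriangulated

namespace Paper

universe v u

variable {C : Type u} [Category.{v} C] [Preadditive C] [HasZeroObject C]
  [HasShift C ℤ] [∀ n : ℤ, (shiftFunctor C n).Additive] [Pretriangulated C]

open CategoryTheory.Triangulated

/-- The right perpendicular of a class of objects. -/
def rPerp (T : Set C) : Set C := {Y | ∀ X ∈ T, ∀ f : X ⟶ Y, f = 0}

/-- The left perpendicular of a class of objects. -/
def lPerp (T : Set C) : Set C := {X | ∀ Y ∈ T, ∀ f : X ⟶ Y, f = 0}

/-- `S^{⊥_{>0}}`. -/
def perpGT (S : Set C) : Set C := {X | ∀ P ∈ S, ∀ m : ℤ, 0 < m → ∀ f : P ⟶ X⟦m⟧, f = 0}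

/-- `S^{⊥_{<0}}`. -/
def perpLT (S : Set C) : Set C := {X | ∀ P ∈ S, ∀ m : ℤ, m < 0 → ∀ f : P ⟶ X⟦m⟧, f = 0}

/-- The pair `(S^{⊥_{>0}}, S^{⊥_{<0}})` is the t-structure `t`. -/
def IsSiltingTStructureFor (S : Set C) (t : TStructure C) : Prop :=
  (∀ X : C, t.le 0 X ↔ X ∈ perpGT S) ∧ (∀ X : C, t.ge 0 X ↔ X ∈ perpLT S)

/-- `X` is a retract (direct summand) of `Y`. -/
def IsRetractOf (X Y : C) : Prop := ∃ (i : X ⟶ Y) (r : Y ⟶ X), i ≫ r = 𝟙 X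


/-- An indecomposable object: nonzero, and not a nontrivial biproduct. -/
def IndecObj {A : Type*} [Category A] [Limits.HasZeroMorphisms A]
    [HasBinaryBiproducts A] (X : A) : Prop :=
  ¬ IsZero X ∧ ∀ Y Z : A, Nonempty (X ≅ Y ⊞ Z) → IsZero Y ∨ IsZero Z

section Biprod
variable [HasFiniteBiproducts C]

/-- The Karoubi closure: direct summands of finite coproducts of objects of `S`. -/
def Kar (S : Set C) : Set C :=
  {X | ∃ (n : ℕ) (f : Fin n → C), (∀ i, f i ∈ S) ∧ IsRetractOf X (⨁ f)}

/-- A class of objects is Krull–Schmidt: every object is a finite biproduct of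
objects of the class with local endomorphism rings. -/
def KrullSchmidtOn (T : Set C) : Prop :=
  ∀ X ∈ T, ∃ (n : ℕ) (f : Fin n → C),
    (∀ i, f i ∈ T ∧ IsLocalRing (End (f i))) ∧ Nonempty (X ≅ ⨁ f)

/-- The category `C` is Krull–Schmidt. -/
def IsKrullSchmidt : Prop :=
  ∀ X : C, ∃ (n : ℕ) (f : Fin n → C),
    (∀ i, IsLocalRing (End (f i))) ∧ Nonempty (X ≅ ⨁ f)

/-- A silting collection: pairwise non-isomorphic indecomposables whose Karoubi
closure is Krull–Schmidt, such that the perpendicular pair is the t-structure `t`. -/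
structure IsSiltingCollection (S : Set C) (t : TStructure C) : Prop where
  indec : ∀ P ∈ S, IndecObj P
  pairwise_noniso : ∀ P ∈ S, ∀ Q ∈ S, P ≠ Q → IsEmpty (P ≅ Q)
  kar_ks : KrullSchmidtOn (Kar S)
  tstr : IsSiltingTStructureFor S t

end Biprod

/-- Derived projective objects with respect to a t-structure. -/
def IsDerivedProjective (t : TStructure C) (P : C) : Prop :=
  t.le 0 P ∧ ∀ (X : C), t.le 0 X → ∀ f : P ⟶ X⟦(1 : ℤ)⟧, f = 0

/-- The heart of a t-structure, as a class of objects. -/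
def heartSet (t : TStructure C) : Set C := {X | t.le 0 X ∧ t.ge 0 X}

/-- The heart of a t-structure, as a full subcategory. -/
abbrev Heart (t : TStructure C) := ObjectProperty.FullSubcategory (fun X : C => X ∈ heartSet t)

instance (P : C → Prop) : Preadditive (ObjectProperty.FullSubcategory P) where
  homGroup X Y := InducedCategory.homEquiv.addCommGroup
  add_comp _ _ _ f f' g := by ext; exact Preadditive.add_comp _ _ _ f.hom f'.hom g.hom
  comp_add _ _ _ f g g' := by ext; exact Preadditive.comp_add _ _ _ f.hom g.hom g'.hom

/-- Truncation data for a t-structure: the truncation functors `t_{≤0}` (right adjoint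
to the inclusion of `D^{t≤0}`), `t_{≥0}` (left adjoint to the inclusion of `D^{t≥0}`),
and the zeroth cohomology functor `H = t_{≤0} ∘ t_{≥0}`. -/
structure TruncationData (t : TStructure C) where
  /-- the zeroth cohomology functor -/
  H : C ⥤ C
  H_heart : ∀ X : C, H.obj X ∈ heartSet t
  τle : C ⥤ C
  τleCounit : τle ⟶ 𝟭 C
  τle_mem : ∀ X : C, t.le 0 (τle.obj X)
  τle_fac : ∀ (X Z : C), t.le 0 Z → ∀ f : Z ⟶ X,
    ∃! g : Z ⟶ τle.obj X, g ≫ τleCounit.app X = f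
  τge : C ⥤ C
  τgeUnit : 𝟭 C ⟶ τge
  τge_mem : ∀ X : C, t.ge 0 (τge.obj X)
  τge_fac : ∀ (X Z : C), t.ge 0 Z → ∀ f : X ⟶ Z,
    ∃! g : τge.obj X ⟶ Z, τgeUnit.app X ≫ g = f
  H_eq : H = τge ⋙ τle

/-- The zeroth cohomology functor, valued in the heart. -/
def TruncationData.Hh {t : TStructure C} (TD : TruncationData t) : C ⥤ Heart t :=
  ObjectProperty.lift _ TD.H TD.H_heart

/-- A projective cover: an essential epimorphism from a projective object. -/
def IsProjectiveCover {A : Type*} [Category A] {P X : A} (π : P ⟶ X) : Prop :=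
  Projective P ∧ Epi π ∧ ∀ (R : A) (g : R ⟶ P), Epi (g ≫ π) → Epi g

/-- A derived projective cover of `X`. -/
def IsDerivedProjectiveCover {t : TStructure C} (TD : TruncationData t)
    {P X : C} (π : P ⟶ X) : Prop :=
  IsDerivedProjective t P ∧ IsProjectiveCover (TD.Hh.map π)

/-- A t-structure is non-degenerate. -/
def NonDegenerate (t : TStructure C) : Prop :=
  (∀ X : C, (∀ n : ℤ, t.le n X) → IsZero X) ∧ (∀ X : C, (∀ n : ℤ, t.ge n X) → IsZero X)

/-- An object of a category has finite length: bounded chains of subobjects. -/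
def FiniteLengthObj {A : Type*} [Category A] (X : A) : Prop :=
  ∃ n : ℕ, ∀ s : Fin (n + 1) → Subobject X, ¬ StrictMono s

/-- `D` has derived projectives: every projective of the heart is `H⁰` of a
derived projective. -/
def HasDerivedProjectives {t : TStructure C} (TD : TruncationData t) : Prop :=
  ∀ Q : Heart t, Projective Q → ∃ P : C, IsDerivedProjective t P ∧ Nonempty (TD.Hh.obj P ≅ Q)

/-- `D` has enough derived projectives. -/
def HasEnoughDerivedProjectives {t : TStructure C} (TD : TruncationData t) : Prop :=
  EnoughProjectives (Heart t) ∧ HasDerivedProjectives TD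

/-- The extension closure of a class of objects. -/
inductive ExtClos (T : Set C) : C → Prop
  | of {X : C} : X ∈ T → ExtClos T X
  | zero {X : C} : IsZero X → ExtClos T X
  | ext {A E B : C} (f : A ⟶ E) (g : E ⟶ B) (h : B ⟶ A⟦(1 : ℤ)⟧) :
      Triangle.mk f g h ∈ (distTriang C) → ExtClos T A → ExtClos T B → ExtClos T E

/-- The Karoubi (retract) closure of a class of objects. -/
def KarClos (T : Set C) : Set C := {X | ∃ Y ∈ T, IsRetractOf X Y}

/-- The triangulated subcategory generated by a class of objects. -/
inductive TriaClos (T : Set C) : C → Prop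
  | of {X : C} : X ∈ T → TriaClos T X
  | zero {X : C} : IsZero X → TriaClos T X
  | shift {X : C} (n : ℤ) : TriaClos T X → TriaClos T (X⟦n⟧)
  | ext {A E B : C} (f : A ⟶ E) (g : E ⟶ B) (h : B ⟶ A⟦(1 : ℤ)⟧) :
      Triangle.mk f g h ∈ (distTriang C) → TriaClos T A → TriaClos T B → TriaClos T E

/-- The thick subcategory generated by a class of objects. -/
inductive ThickClos (T : Set C) : C → Prop
  | of {X : C} : X ∈ T → ThickClos T X
  | zero {X : C} : IsZero X → ThickClos T X
  | shift {X : C} (n : ℤ) : ThickClos T X → ThickClos T (X⟦n⟧)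
  | ext {A E B : C} (f : A ⟶ E) (g : E ⟶ B) (h : B ⟶ A⟦(1 : ℤ)⟧) :
      Triangle.mk f g h ∈ (distTriang C) → ThickClos T A → ThickClos T B → ThickClos T E
  | retract {X Y : C} : IsRetractOf X Y → ThickClos T Y → ThickClos T X

/-- A thick subcategory, as a class of objects. -/
structure IsThickSet (T : Set C) : Prop where
  zero : ∀ X : C, IsZero X → X ∈ T
  shift : ∀ X ∈ T, ∀ n : ℤ, X⟦n⟧ ∈ T
  ext : ∀ (A E B : C) (f : A ⟶ E) (g : E ⟶ B) (h : B ⟶ A⟦(1 : ℤ)⟧),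
    Triangle.mk f g h ∈ (distTriang C) → A ∈ T → B ∈ T → E ∈ T
  retract : ∀ X Y : C, IsRetractOf X Y → Y ∈ T → X ∈ T

/-- A weight structure on the subcategory of `C` given by the class `CC`. -/
structure WeightStructureOn (CC : Set C) where
  le : Set C
  ge : Set C
  le_sub : le ⊆ CC
  ge_sub : ge ⊆ CC
  le_iso : ∀ X Y : C, (X ≅ Y) → X ∈ le → Y ∈ le
  ge_iso : ∀ X Y : C, (X ≅ Y) → X ∈ ge → Y ∈ ge
  le_retract : ∀ X Y : C, IsRetractOf X Y → Y ∈ le → X ∈ le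
  ge_retract : ∀ X Y : C, IsRetractOf X Y → Y ∈ ge → X ∈ ge
  le_shift : ∀ X ∈ le, X⟦(1 : ℤ)⟧ ∈ le
  ge_shift : ∀ X ∈ ge, X⟦(-1 : ℤ)⟧ ∈ ge
  orth : ∀ X : C, X⟦(1 : ℤ)⟧ ∈ ge → ∀ Y ∈ le, ∀ f : X ⟶ Y, f = 0
  decomp : ∀ X ∈ CC, ∃ (A B : C) (f : A ⟶ X) (g : X ⟶ B) (h : B ⟶ A⟦(1 : ℤ)⟧),
    Triangle.mk f g h ∈ (distTriang C) ∧ A⟦(1 : ℤ)⟧ ∈ ge ∧ B ∈ le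

namespace WeightStructureOn

variable {CC : Set C} (w : WeightStructureOn CC)

/-- `C_{w>0}`. -/
def gt : Set C := {X | X⟦(1 : ℤ)⟧ ∈ w.ge}

/-- `C_{w<0}`. -/
def lt : Set C := {X | X⟦(-1 : ℤ)⟧ ∈ w.le}

end WeightStructureOn

/-!
Since `⊥(D^{t≥1}) = D^{t≤0}`, conditions (ii) and (iii) say the same thing, and each clearly
implies (i). Conversely, under (i) an object of `𝒞` lying in `D^{t≤0}` (resp. left orthogonal to
`D^{t≤-1}`) receives no nonzero map from `𝒞_{w>0}` (resp. sends no nonzero map to `𝒞_{w<0}`);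
one map of a weight decomposition of it (resp. of its shift by `-1`) then vanishes, which makes
it a retract of an object of `𝒞_{w≤0}` (resp. of `𝒞_{w≥0}`).
-/

lemma isRetractOf_obj₁_of_mor₂_eq_zero {T : Triangle C} (hT : T ∈ distTriang C)
    (h : T.mor₂ = 0) : IsRetractOf T.obj₂ T.obj₁ := by
  obtain ⟨s, hs⟩ := Triangle.coyoneda_exact₂ T hT (𝟙 _) (by rw [h, comp_zero])
  exact ⟨s, T.mor₁, hs.symm⟩

lemma isRetractOf_obj₃_of_mor₁_eq_zero {T : Triangle C} (hT : T ∈ distTriang C)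
    (h : T.mor₁ = 0) : IsRetractOf T.obj₂ T.obj₃ := by
  obtain ⟨r, hr⟩ := Triangle.yoneda_exact₂ T hT (𝟙 _) (by rw [h, zero_comp])
  exact ⟨T.mor₂, r, hr.symm⟩

lemma lPerp_setOf_ge_one (t : TStructure C) :
    lPerp {Y : C | t.ge 1 Y} = {X | t.le 0 X} := by
  ext X
  simp only [lPerp, Set.mem_ofPred_eq, t.le_iff_isLE, t.isLE_iff_orthogonal 0 1 rfl,
    t.ge_iff_isGE]
  exact ⟨fun h Y f hY => h Y hY f, fun h Y hY f => h Y f hY⟩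

namespace WeightStructureOn

variable {CC : Set C} (w : WeightStructureOn CC)

lemma mem_le_of_forall_gt_hom_eq_zero {X : C} (hX : X ∈ CC)
    (h : ∀ A ∈ w.gt, ∀ f : A ⟶ X, f = 0) : X ∈ w.le := by
  obtain ⟨A, B, f, g, _, mem, hA, hB⟩ := w.decomp X hX
  exact w.le_retract X B (isRetractOf_obj₃_of_mor₁_eq_zero mem (h A hA f)) hB

lemma mem_ge_of_forall_le_hom_shift_eq_zero (hCC : ∀ X ∈ CC, X⟦(-1 : ℤ)⟧ ∈ CC)
    {X : C} (hX : X ∈ CC) (h : ∀ B ∈ w.le, ∀ f : X ⟶ B⟦(1 : ℤ)⟧, f = 0) : X ∈ w.ge := by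
  obtain ⟨A, B, f, g, _, mem, hA, hB⟩ := w.decomp _ (hCC X hX)
  let e := (shiftFunctorCompIsoId C (-1 : ℤ) 1 (by omega)).app X
  have hg : g = 0 := by
    rw [← (shiftFunctor C (1 : ℤ)).map_eq_zero_iff, ← cancel_epi e.inv, comp_zero]
    exact h B hB _
  obtain ⟨s, r, hsr⟩ := isRetractOf_obj₁_of_mor₂_eq_zero mem hg
  let ρ := (Retract.mk s r hsr).map (shiftFunctor C (1 : ℤ))
  exact w.ge_iso _ _ e (w.ge_retract _ _ ⟨ρ.i, ρ.r, ρ.retract⟩ hA)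

variable {t : TStructure C}

lemma le_eq_setOf_le_zero_inter (h : w.ge ⊆ lPerp {Y : C | t.le (-1) Y})
    (hle : w.le ⊆ {X | t.le 0 X}) : w.le = {X | t.le 0 X} ∩ CC := by
  refine subset_antisymm (fun X hX => ⟨hle hX, w.le_sub hX⟩) ?_
  rintro X ⟨hX, hXC⟩
  refine w.mem_le_of_forall_gt_hom_eq_zero hXC fun A hA f => ?_
  rw [← (shiftFunctor C (1 : ℤ)).map_eq_zero_iff]
  exact h hA _ (t.le_shift 0 1 (-1) (by omega) X hX) _

lemma ge_eq_lPerp_inter (hCC : ∀ X ∈ CC, X⟦(-1 : ℤ)⟧ ∈ CC)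
    (h : w.ge ⊆ lPerp {Y : C | t.le (-1) Y}) (hle : w.le ⊆ {X | t.le 0 X}) :
    w.ge = lPerp {Y : C | t.le (-1) Y} ∩ CC := by
  refine subset_antisymm (fun X hX => ⟨h hX, w.ge_sub hX⟩) ?_
  rintro X ⟨hX, hXC⟩
  exact w.mem_ge_of_forall_le_hom_shift_eq_zero hCC hXC fun B hB f =>
    hX _ (t.le_shift 0 1 (-1) (by omega) B (hle hB)) f

end WeightStructureOn

/-- for a weight structure on a thick subcategory, left orthogonality,
w-strict left orthogonality, and the intersection description are equivalent. -/
theorem orthogonality_lemma (CC : Set C) (hCC : IsThickSet CC)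
    (w : WeightStructureOn CC) (t : TStructure C) :
    List.TFAE [
      (∀ X ∈ w.ge, ∀ Y : C, t.le (-1) Y → ∀ f : X ⟶ Y, f = 0) ∧
        (∀ X ∈ w.le, ∀ Y : C, t.ge 1 Y → ∀ f : X ⟶ Y, f = 0),
      w.ge = lPerp {Y : C | t.le (-1) Y} ∩ CC ∧
        w.le = lPerp {Y : C | t.ge 1 Y} ∩ CC,
      w.le = {X : C | t.le 0 X} ∩ CC ∧
        w.ge = lPerp {Y : C | t.le (-1) Y} ∩ CC] := by
  have hperp := lPerp_setOf_ge_one t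
  tfae_have 1 → 3 := by
    rintro ⟨hge, hle⟩
    have hle' : w.le ⊆ {X | t.le 0 X} := hperp ▸ hle
    exact ⟨w.le_eq_setOf_le_zero_inter hge hle',
      w.ge_eq_lPerp_inter (fun X hX => hCC.shift X hX (-1)) hge hle'⟩
  tfae_have 3 → 2 := fun ⟨hle, hge⟩ => ⟨hge, hperp ▸ hle⟩
  tfae_have 2 → 1 := fun ⟨hge, hle⟩ =>
    ⟨fun X hX => (hge.subset hX).1, fun X hX => (hle.subset hX).1⟩
  tfae_finish

end Paper
end

section
/- Let $\mathcal{D}$ be a triangulated category, $\silting$ a silting collection with induced weight structure $w$ on $\mathcal{C} = \mathrm{thick}(\silting)$, and $\simplem$ a simple-minded collection with induced t-structure $t$ on $\mathcal{D}$. If there is a bijection $\phi \colon \silting \to \simplem$ such that $\mathrm{Hom}(P, L[m]) = 0$ for all $P \in \silting$, $L \in \simplem$, $m \in \mathbb{Z}$ except when $L = \phi(P)$ and $m = 0$, then $w$ is left orthogonal to $t$, i.e. $\mathcal{C}_{w\geq 0} \perp \mathcal{D}^{t<0}$ and $\mathcal{C}_{w\leq 0} \perp \mathcal{D}^{t>0}$.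 -/
open CategoryTheory Limits Pretriangulated

namespace Paper

universe v u

variable {C : Type u} [Category.{v} C] [Preadditive C] [HasZeroObject C]
  [HasShift C ℤ] [∀ n : ℤ, (shiftFunctor C n).Additive] [Pretriangulated C]

open CategoryTheory.Triangulated

/- Morphisms into an object vanish on an extension closure because the Hom-sequence of a
distinguished triangle is exact, and on direct summands because a retraction factors the
identity. So it suffices to test the generators `P⟦m⟧` and `L⟦n⟧`, where
`Hom(P⟦m⟧, L⟦n⟧) ≅ Hom(P, L⟦n - m⟧)` vanishes because `n - m ≠ 0` in both cases. -/

lemma lPerp_subset_lPerp_extClos (T : Set C) : lPerp T ⊆ lPerp {Y | ExtClos T Y} := by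
  intro X hX Y hY
  induction hY with
  | of hB => exact hX _ hB
  | zero hB => exact fun f => hB.eq_of_tgt f 0
  | ext u v w hT _ _ ihA ihB =>
    intro f
    obtain ⟨g, rfl⟩ := Triangle.coyoneda_exact₂ _ hT f (ihB _)
    rw [ihA g]
    exact zero_comp

lemma rPerp_subset_rPerp_extClos (T : Set C) : rPerp T ⊆ rPerp {X | ExtClos T X} := by
  intro Y hY X hX
  induction hX with
  | of hA => exact hY _ hA
  | zero hA => exact fun f => hA.eq_of_src f 0
  | ext u v w hT _ _ ihA ihB =>
    intro f
    obtain ⟨g, rfl⟩ := Triangle.yoneda_exact₂ _ hT f (ihA _)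
    rw [ihB g]
    exact comp_zero

lemma rPerp_subset_rPerp_karClos {D : Type*} [Category D] [Preadditive D] (T : Set D) :
    rPerp T ⊆ rPerp (KarClos T) := by
  rintro Y hY X ⟨X', hX', i, r, hir⟩ f
  rw [← Category.id_comp f, ← hir, Category.assoc, hY _ hX' (r ≫ f), comp_zero]

lemma karClos_extClos_hom_eq_zero {T₁ T₂ : Set C} (h : T₁ ⊆ lPerp T₂) {X Y : C}
    (hX : KarClos {X | ExtClos T₁ X} X) (hY : ExtClos T₂ Y) (f : X ⟶ Y) : f = 0 := by
  have hYT₁ : Y ∈ rPerp T₁ := fun A hA => lPerp_subset_lPerp_extClos T₂ (h hA) Y hY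
  exact rPerp_subset_rPerp_karClos _ (rPerp_subset_rPerp_extClos T₁ hYT₁) X hX f

lemma shift_hom_eq_zero {D : Type*} [Category D] [Preadditive D] [HasShift D ℤ]
    {X Y : D} {m n : ℤ} (h : ∀ g : X ⟶ Y⟦n - m⟧, g = 0) (f : X⟦m⟧ ⟶ Y⟦n⟧) : f = 0 := by
  rw [← (shiftFunctor D (-m)).map_eq_zero_iff]
  have hg := h ((shiftFunctorCompIsoId D m (-m) (add_neg_cancel m)).inv.app X ≫
    f⟦-m⟧' ≫ (shiftFunctorAdd' D n (-m) (n - m) (sub_eq_add_neg n m).symm).inv.app Y)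
  simpa using hg

lemma hom_eq_zero_of_iso_shift {D : Type*} [Category D] [Preadditive D] [HasShift D ℤ]
    {X Y A B : D} {m n : ℤ} (h : ∀ g : X ⟶ Y⟦n - m⟧, g = 0)
    (eA : A ≅ X⟦m⟧) (eB : B ≅ Y⟦n⟧) (f : A ⟶ B) : f = 0 := by
  rw [← (eA.homCongr eB).symm_apply_apply f, shift_hom_eq_zero h (eA.homCongr eB f)]
  simp

theorem silting_smc_left_orthogonal_general (S : Set C) (M : Set C) (φ : S → M)
    (hvan : ∀ (P : S) (L : M) (m : ℤ), ¬((L : C) = (φ P : C) ∧ m = 0) →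
      ∀ f : (P : C) ⟶ (L : C)⟦m⟧, f = 0) :
    (∀ X, KarClos {X | ExtClos {X : C | ∃ P ∈ S, ∃ m : ℤ, m ≤ 0 ∧ Nonempty (X ≅ P⟦m⟧)} X} X →
      ∀ Y : C, ExtClos {Y : C | ∃ L ∈ M, ∃ m : ℤ, 1 ≤ m ∧ Nonempty (Y ≅ L⟦m⟧)} Y →
      ∀ f : X ⟶ Y, f = 0) ∧
    (∀ X, KarClos {X | ExtClos {X : C | ∃ P ∈ S, ∃ m : ℤ, 0 ≤ m ∧ Nonempty (X ≅ P⟦m⟧)} X} X →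
      ∀ Y : C, ExtClos {Y : C | ∃ L ∈ M, ∃ m : ℤ, m ≤ -1 ∧ Nonempty (Y ≅ L⟦m⟧)} Y →
      ∀ f : X ⟶ Y, f = 0) := by
  have shifts_orthogonal (p q : ℤ → Prop) (hpq : ∀ m n, p m → q n → n - m ≠ 0) :
      {X : C | ∃ P ∈ S, ∃ m : ℤ, p m ∧ Nonempty (X ≅ P⟦m⟧)} ⊆
        lPerp {Y : C | ∃ L ∈ M, ∃ n : ℤ, q n ∧ Nonempty (Y ≅ L⟦n⟧)} := by
    rintro A ⟨P, hP, m, hm, ⟨eA⟩⟩ B ⟨L, hL, n, hn, ⟨eB⟩⟩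
    exact hom_eq_zero_of_iso_shift
      (hvan ⟨P, hP⟩ ⟨L, hL⟩ (n - m) fun h => hpq m n hm hn h.2) eA eB
  exact ⟨fun X hX Y hY => karClos_extClos_hom_eq_zero
      (shifts_orthogonal (· ≤ 0) (1 ≤ ·) (by omega)) hX hY,
    fun X hX Y hY => karClos_extClos_hom_eq_zero
      (shifts_orthogonal (0 ≤ ·) (· ≤ -1) (by omega)) hX hY⟩

/-- Hom-vanishing conditions between a silting collection and a
simple-minded collection imply left orthogonality of the induced weight structure
and t-structure. -/
theorem silting_smc_left_orthogonal [HasFiniteBiproducts C]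
    (S : Set C) (tS : TStructure C) (hS : IsSiltingCollection S tS)
    (M : Set C)
    (hM1 : ∀ L ∈ M, ∀ L' ∈ M, ∀ m : ℤ, m < 0 → ∀ f : L ⟶ L'⟦m⟧, f = 0)
    (hM2 : ∀ L ∈ M, ∀ L' ∈ M, L ≠ L' → ∀ f : L ⟶ L', f = 0)
    (hM3 : ∀ L ∈ M, Nontrivial (End L) ∧ ∀ f : End L, f ≠ 0 → IsUnit f)
    (hM4 : ∀ X : C, TriaClos M X)
    (φ : S → M) (hφ : Function.Bijective φ)
    (hvan : ∀ (P : S) (L : M) (m : ℤ), ¬((L : C) = (φ P : C) ∧ m = 0) →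
      ∀ f : (P : C) ⟶ (L : C)⟦m⟧, f = 0) :
    (∀ X, KarClos {X | ExtClos {X : C | ∃ P ∈ S, ∃ m : ℤ, m ≤ 0 ∧ Nonempty (X ≅ P⟦m⟧)} X} X →
      ∀ Y : C, ExtClos {Y : C | ∃ L ∈ M, ∃ m : ℤ, 1 ≤ m ∧ Nonempty (Y ≅ L⟦m⟧)} Y →
      ∀ f : X ⟶ Y, f = 0) ∧
    (∀ X, KarClos {X | ExtClos {X : C | ∃ P ∈ S, ∃ m : ℤ, 0 ≤ m ∧ Nonempty (X ≅ P⟦m⟧)} X} X →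
      ∀ Y : C, ExtClos {Y : C | ∃ L ∈ M, ∃ m : ℤ, m ≤ -1 ∧ Nonempty (Y ≅ L⟦m⟧)} Y →
      ∀ f : X ⟶ Y, f = 0) :=
  silting_smc_left_orthogonal_general S M φ hvan

end Paper
end
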